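/- (Proposition 3, left-inverse identity.) Fix a real number Δt ∈ (0,1] and let (A,G) ∈ S(Δt). Writing λ := λ(A,G,Δt), one has A = (|λ|² − 2·Re(λ) + 1)/(Δt²·|λ|²) and G = (1 − |λ|²)/(Δt·|λ|²). -/

import Mathlib

/-! The square root cancels in `‖λ‖²`, which turns out to be `1 / (1 + Δt G)`; this gives `G`,
and then `Re λ = (1 + Δt G / 2 - Δt² A / 2) / (1 + Δt G)` gives `A`. -/

/-- The eigenvalue of the D-LinOSS recurrent matrix `M(A,G,Δt)` with nonnegative
imaginary part (under the stability criterion). -/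
noncomputable def lamEig (A G Δt : ℝ) : ℂ :=
  ((1 + (Δt / 2) * G - (Δt ^ 2 / 2) * A) / (1 + Δt * G) : ℝ) +
    Complex.I * ((Δt / 2) * Real.sqrt (4 * A - (G - Δt * A) ^ 2) / (1 + Δt * G) : ℝ)

open Complex

lemma lamEig_re (A G Δt : ℝ) :
    (lamEig A G Δt).re = (1 + (Δt / 2) * G - (Δt ^ 2 / 2) * A) / (1 + Δt * G) := by
  simp only [lamEig, add_re, mul_re, I_re, I_im, ofReal_re, ofReal_im]
  ring

lemma lamEig_im (A G Δt : ℝ) :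
    (lamEig A G Δt).im = (Δt / 2) * √(4 * A - (G - Δt * A) ^ 2) / (1 + Δt * G) := by
  simp only [lamEig, add_im, mul_im, I_re, I_im, ofReal_re, ofReal_im]
  ring

lemma normSq_lamEig {A G Δt : ℝ} (hcrit : (G - Δt * A) ^ 2 ≤ 4 * A) :
    normSq (lamEig A G Δt) = (1 + Δt * G)⁻¹ := by
  have hsqrt := Real.sq_sqrt (sub_nonneg.2 hcrit)
  rw [normSq_apply, lamEig_re, lamEig_im, div_mul_div_comm, div_mul_div_comm, ← add_div,
    ← div_self_mul_self']
  congr 1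
  -- with `u = Δt * G`, `v = Δt ^ 2 * A`: `(1 + (u - v) / 2) ^ 2 + v - (u - v) ^ 2 / 4 = 1 + u`
  linear_combination (Δt / 2) ^ 2 * hsqrt

theorem lamEig_left_inverse_general (Δt : ℝ) (hΔt : Δt ∈ Set.Ioc (0 : ℝ) 1)
    (A G : ℝ) (hG : 0 ≤ G) (hcrit : (G - Δt * A) ^ 2 ≤ 4 * A) :
    A = (‖lamEig A G Δt‖ ^ 2 - 2 * (lamEig A G Δt).re + 1) /
        (Δt ^ 2 * ‖lamEig A G Δt‖ ^ 2) ∧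
    G = (1 - ‖lamEig A G Δt‖ ^ 2) /
        (Δt * ‖lamEig A G Δt‖ ^ 2) := by
  have hΔt₀ : 0 < Δt := hΔt.1
  have hd : 0 < 1 + Δt * G := by positivity
  rw [← normSq_eq_norm_sq, normSq_lamEig hcrit, lamEig_re]
  constructor <;> field_simp <;> ring

theorem lamEig_left_inverse (Δt : ℝ) (hΔt : Δt ∈ Set.Ioc (0 : ℝ) 1)
    (A G : ℝ) (hA : 0 ≤ A) (hG : 0 ≤ G) (hcrit : (G - Δt * A) ^ 2 ≤ 4 * A) :
    A = (‖lamEig A G Δt‖ ^ 2 - 2 * (lamEig A G Δt).re + 1) /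
        (Δt ^ 2 * ‖lamEig A G Δt‖ ^ 2) ∧
    G = (1 - ‖lamEig A G Δt‖ ^ 2) /
        (Δt * ‖lamEig A G Δt‖ ^ 2) :=
  lamEig_left_inverse_general Δt hΔt A G hG hcrit
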